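/- Let a = (a_1,...,a_n) with 0 < a_1 ≤ ... ≤ a_n, and fix 1 ≤ k ≤ n−1. Then a_1 σ_{k-1;1}(a)/σ_k(a) = k/n = a_n σ_{k-1;n}(a)/σ_k(a) holds if and only if a = C·(1,1,...,1) for some constant C > 0. -/

import Mathlib

open Finset

/-- The `k`-th elementary symmetric polynomial of `a : Fin n → ℝ`. -/
noncomputable def esymm (n k : ℕ) (a : Fin n → ℝ) : ℝ :=
  ∑ s ∈ Finset.powersetCard k (Finset.univ : Finset (Fin n)), ∏ i ∈ s, a i

/-- The `k`-th elementary symmetric polynomial of `a` with the `i`-th entry removed. -/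
noncomputable def esymmDel (n k : ℕ) (a : Fin n → ℝ) (i : Fin n) : ℝ :=
  ∑ s ∈ Finset.powersetCard k ((Finset.univ : Finset (Fin n)).erase i), ∏ j ∈ s, a j

/-!
Splitting `a_j` off `σ_{k-1;i}` and `a_i` off `σ_{k-1;j}` gives
`a_j σ_{k-1;j} - a_i σ_{k-1;i} = (a_j - a_i) σ_{k-1}(a without a_i, a_j)`, and the last factor is
positive. Equality of the two ratios therefore forces `a_1 = a_n`, and monotonicity makes `a`
constant. Conversely, for constant `a` both ratios equal `k/n` because
`n binom(n-1, k-1) = k binom(n, k)`.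
-/

namespace Multiset

variable {R : Type*}

theorem esymm_cons_succ [CommSemiring R] (x : R) (s : Multiset R) (m : ℕ) :
    (x ::ₘ s).esymm (m + 1) = s.esymm (m + 1) + x * s.esymm m := by
  simp [esymm, powersetCard_cons, sum_map_mul_left]

theorem mul_esymm_cons_sub_mul_esymm_cons [CommRing R] (x y : R) (s : Multiset R) (m : ℕ) :
    y * (x ::ₘ s).esymm m - x * (y ::ₘ s).esymm m = (y - x) * s.esymm m := by
  cases m with
  | zero => simp [esymm]
  | succ m => rw [esymm_cons_succ, esymm_cons_succ]; ring

end Multiset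

namespace Finset

variable {ι R : Type*}

theorem sum_powersetCard_prod_pos [CommSemiring R] [PartialOrder R] [IsStrictOrderedRing R]
    {s : Finset ι} {m : ℕ} (hm : m ≤ #s) {f : ι → R} (hf : ∀ i ∈ s, 0 < f i) :
    0 < ∑ t ∈ powersetCard m s, ∏ i ∈ t, f i := by
  refine sum_pos (fun t ht => prod_pos fun i hi => hf i ?_) (powersetCard_nonempty.2 hm)
  exact (mem_powersetCard.1 ht).1 hi

theorem sum_powersetCard_prod_const [CommSemiring R] (s : Finset ι) (m : ℕ) (c : R) :
    ∑ t ∈ powersetCard m s, ∏ _i ∈ t, c = (#s).choose m * c ^ m := by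
  simp only [prod_const, sum_powersetCard, nsmul_eq_mul]

end Finset

section ElementarySymmetric

variable {n : ℕ}

theorem mul_esymmDel_sub_mul_esymmDel (m : ℕ) (a : Fin n → ℝ) {i j : Fin n} (hij : i ≠ j) :
    a j * esymmDel n m a j - a i * esymmDel n m a i =
      (a j - a i) * ∑ t ∈ powersetCard m ((univ.erase i).erase j), ∏ l ∈ t, a l := by
  have hj : j ∉ (univ.erase i).erase j := notMem_erase _ _
  have hi : i ∉ (univ.erase i).erase j := fun h => notMem_erase _ _ (mem_of_mem_erase h)
  have insert_i : insert i ((univ.erase i).erase j) = univ.erase j := by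
    rw [erase_right_comm, insert_erase (mem_erase.2 ⟨hij, mem_univ i⟩)]
  have insert_j : insert j ((univ.erase i).erase j) = univ.erase i :=
    insert_erase (mem_erase.2 ⟨hij.symm, mem_univ j⟩)
  have h := Multiset.mul_esymm_cons_sub_mul_esymm_cons (a i) (a j)
    (((univ.erase i).erase j).val.map a) m
  rw [← Multiset.map_cons, ← Multiset.map_cons, ← insert_val_of_notMem hi,
    ← insert_val_of_notMem hj, insert_i, insert_j] at h
  simpa only [esymmDel, esymm_map_val] using h

theorem eq_of_mul_esymmDel_eq {m : ℕ} (hm : m + 2 ≤ n) {a : Fin n → ℝ} (ha : ∀ i, 0 < a i)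
    {i j : Fin n} (hij : i ≠ j) (h : a i * esymmDel n m a i = a j * esymmDel n m a j) :
    a i = a j := by
  have hrest : 0 < ∑ t ∈ powersetCard m ((univ.erase i).erase j), ∏ l ∈ t, a l :=
    sum_powersetCard_prod_pos (by
      rw [card_erase_of_mem (mem_erase.2 ⟨hij.symm, mem_univ j⟩), card_erase_of_mem (mem_univ i),
        card_univ, Fintype.card_fin]
      omega) fun l _ => ha l
  have hprod := mul_esymmDel_sub_mul_esymmDel m a hij
  rw [h, sub_self, eq_comm, mul_eq_zero] at hprod
  exact (sub_eq_zero.1 (hprod.resolve_right hrest.ne')).symm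

theorem esymm_pos {m : ℕ} (hm : m ≤ n) {a : Fin n → ℝ} (ha : ∀ i, 0 < a i) :
    0 < esymm n m a :=
  sum_powersetCard_prod_pos (by simpa using hm) fun i _ => ha i

theorem esymm_const (m : ℕ) (C : ℝ) : esymm n m (fun _ => C) = n.choose m * C ^ m := by
  rw [esymm, sum_powersetCard_prod_const, card_univ, Fintype.card_fin]

theorem esymmDel_const (m : ℕ) (C : ℝ) (i : Fin n) :
    esymmDel n m (fun _ => C) i = (n - 1).choose m * C ^ m := by
  rw [esymmDel, sum_powersetCard_prod_const, card_erase_of_mem (mem_univ i), card_univ,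
    Fintype.card_fin]

theorem mul_esymmDel_const_div_esymm_const {m : ℕ} (hm : m < n) {C : ℝ} (hC : C ≠ 0)
    (i : Fin n) :
    C * esymmDel n m (fun _ => C) i / esymm n (m + 1) (fun _ => C) = (m + 1 : ℝ) / n := by
  obtain ⟨n, rfl⟩ : ∃ n', n = n' + 1 := ⟨n - 1, by omega⟩
  have hchoose : ((n + 1 : ℕ) : ℝ) * n.choose m = (n + 1).choose (m + 1) * (m + 1) := by
    exact_mod_cast Nat.add_one_mul_choose_eq n m
  have hpos : (0 : ℝ) < (n + 1).choose (m + 1) := by exact_mod_cast Nat.choose_pos hm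
  rw [esymmDel_const, esymm_const, Nat.add_sub_cancel, div_eq_div_iff (by positivity)
    (by positivity)]
  linear_combination C ^ (m + 1) * hchoose

end ElementarySymmetric

/-- For 1 ≤ k ≤ n−1, ξ̲_k(a) = k/n = ξ̄_k(a) holds iff a = C·(1,...,1) for some C > 0. -/
theorem xi_eq_iff_const (n : ℕ) (hn : 0 < n) (a : Fin n → ℝ)
    (ha : ∀ i, 0 < a i) (hmono : Monotone a) (k : ℕ) (hk1 : 1 ≤ k) (hk2 : k ≤ n - 1) :
    (a ⟨0, hn⟩ * esymmDel n (k - 1) a ⟨0, hn⟩ / esymm n k a = (k : ℝ) / n ∧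
     a ⟨n - 1, by omega⟩ * esymmDel n (k - 1) a ⟨n - 1, by omega⟩ / esymm n k a = (k : ℝ) / n)
    ↔ ∃ C : ℝ, 0 < C ∧ a = fun _ => C := by
  set i : Fin n := ⟨0, hn⟩
  set j : Fin n := ⟨n - 1, by omega⟩
  constructor
  · rintro ⟨hi, hj⟩
    have hσ : esymm n k a ≠ 0 := (esymm_pos (by omega) ha).ne'
    have hends : a i = a j :=
      eq_of_mul_esymmDel_eq (by omega) ha (by simp only [i, j, ne_eq, Fin.mk.injEq]; omega)
        ((div_left_inj' hσ).1 (hi.trans hj.symm))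
    refine ⟨a i, ha i, funext fun t => le_antisymm ?_ (hmono (Fin.le_def.2 (Nat.zero_le _)))⟩
    exact hends ▸ hmono (Fin.le_def.2 (by simp only [j]; omega))
  · rintro ⟨C, hC, rfl⟩
    obtain ⟨m, rfl⟩ : ∃ m, k = m + 1 := ⟨k - 1, by omega⟩
    rw [Nat.add_sub_cancel, Nat.cast_succ]
    exact ⟨mul_esymmDel_const_div_esymm_const (by omega) hC.ne' i,
      mul_esymmDel_const_div_esymm_const (by omega) hC.ne' j⟩
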